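/- Let ρ, τ be density operators with k := D_max(ρ‖τ), and suppose P(τ, φ⁺_m) ≤ √ε/2 for a pure state φ⁺_m. Then for n ≥ 2^{k+2}/ε, the state ρ^{(n)} := (1/n)ρ + ((n−1)/n)τ satisfies P(ρ^{(n)}, φ⁺_m) ≤ √ε, and hence F_U(ρ^{(n)}, φ⁺_m) ≥ 1 − ε. -/

import Mathlib

open Classical

open Matrix
open scoped ComplexOrder

noncomputable def msqrt {n : Type*} [Fintype n] [DecidableEq n] (A : Matrix n n ℂ) :
    Matrix n n ℂ :=
  if h : A.PosSemidef then
    (h.1.eigenvectorUnitary : Matrix n n ℂ) * diagonal ((↑) ∘ (√·) ∘ h.1.eigenvalues) *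
      (star h.1.eigenvectorUnitary : Matrix n n ℂ)
  else 0

/-- Uhlmann fidelity F_U(ρ,σ) = (Tr √(√σ ρ √σ))². -/
noncomputable def uFid {n : Type*} [Fintype n] [DecidableEq n] (ρ σ : Matrix n n ℂ) : ℝ :=
  ((msqrt (msqrt σ * ρ * msqrt σ)).trace.re) ^ 2

/-- Purified distance. -/
noncomputable def pDist {n : Type*} [Fintype n] [DecidableEq n] (ρ σ : Matrix n n ℂ) : ℝ :=
  Real.sqrt (1 - uFid ρ σ)

def IsDensity {n : Type*} [Fintype n] [DecidableEq n] (ρ : Matrix n n ℂ) : Prop :=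
  ρ.PosSemidef ∧ ρ.trace = 1

noncomputable def Dmax {n : Type*} [Fintype n] [DecidableEq n] (ρ σ : Matrix n n ℂ) : ℝ :=
  sInf {l : ℝ | (((2 : ℝ) ^ l) • σ - ρ).PosSemidef}

/-!
Since the target `φ` is pure, the Uhlmann fidelity against it is the expectation value
`⟨φ|σ|φ⟩`, which is affine in `σ`. Hence `F(ρ⁽ⁿ⁾, φ) ≥ (1 - 1/n) F(τ, φ) ≥ 1 - 1/n - ε/4`.
For states `D_max(ρ‖τ) ≥ 0` (taking traces in `ρ ≤ 2^λ τ` gives `2^λ ≥ 1`), so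
`n ≥ 2^(k+2)/ε ≥ 4/ε` and `1/n ≤ ε/4`.
-/

section

variable {ι : Type*} [Fintype ι] [DecidableEq ι]

lemma msqrt_eq_cfc {A : Matrix ι ι ℂ} (hA : A.PosSemidef) : msqrt A = cfc Real.sqrt A := by
  rw [msqrt, dif_pos hA, hA.1.cfc_eq, IsHermitian.cfc, Unitary.conjStarAlgAut_apply]
  rfl

lemma msqrt_eq_of_sq_eq {A B : Matrix ι ι ℂ} (hB : B.PosSemidef) (h : B ^ 2 = A) :
    msqrt A = B := by
  have hB' : IsSelfAdjoint B := hB.1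
  rw [msqrt_eq_cfc (h ▸ hB.pow 2), ← h, ← cfc_comp_pow Real.sqrt 2 B]
  conv_rhs => rw [← cfc_id' ℝ B]
  refine cfc_congr fun x hx => ?_
  rw [hB.1.spectrum_real_eq_range_eigenvalues] at hx
  obtain ⟨i, rfl⟩ := hx
  exact Real.sqrt_sq (hB.eigenvalues_nonneg i)

omit [DecidableEq ι] in
lemma vecMulVec_star_mul_mul_vecMulVec_star (φ : ι → ℂ) (ρ : Matrix ι ι ℂ) :
    vecMulVec φ (star φ) * ρ * vecMulVec φ (star φ)
      = (star φ ⬝ᵥ ρ *ᵥ φ) • vecMulVec φ (star φ) := by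
  rw [vecMulVec_mul, vecMulVec_mul_vecMulVec, ← dotProduct_mulVec, vecMulVec_smul]

variable {φ : ι → ℂ}

lemma vecMulVec_star_sq (hφ : star φ ⬝ᵥ φ = 1) :
    vecMulVec φ (star φ) ^ 2 = vecMulVec φ (star φ) := by
  simpa [sq, hφ] using vecMulVec_star_mul_mul_vecMulVec_star φ 1

lemma msqrt_vecMulVec_star (hφ : star φ ⬝ᵥ φ = 1) :
    msqrt (vecMulVec φ (star φ)) = vecMulVec φ (star φ) :=
  msqrt_eq_of_sq_eq (posSemidef_vecMulVec_self_star φ) (vecMulVec_star_sq hφ)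

lemma msqrt_smul_vecMulVec_star (hφ : star φ ⬝ᵥ φ = 1) {r : ℝ} (hr : 0 ≤ r) :
    msqrt (r • vecMulVec φ (star φ)) = √r • vecMulVec φ (star φ) := by
  refine msqrt_eq_of_sq_eq ((posSemidef_vecMulVec_self_star φ).smul (Real.sqrt_nonneg r)) ?_
  rw [smul_pow, vecMulVec_star_sq hφ, Real.sq_sqrt hr]

lemma uFid_vecMulVec_star {ρ : Matrix ι ι ℂ} (hρ : ρ.PosSemidef) (hφ : star φ ⬝ᵥ φ = 1) :
    uFid ρ (vecMulVec φ (star φ)) = (star φ ⬝ᵥ ρ *ᵥ φ).re := by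
  have hc : star φ ⬝ᵥ ρ *ᵥ φ = ((star φ ⬝ᵥ ρ *ᵥ φ).re : ℂ) :=
    Complex.eq_re_of_ofReal_le (r := 0) (by simpa using hρ.dotProduct_mulVec_nonneg φ)
  have hc0 : 0 ≤ (star φ ⬝ᵥ ρ *ᵥ φ).re := hρ.re_dotProduct_nonneg φ
  have hsand : msqrt (vecMulVec φ (star φ)) * ρ * msqrt (vecMulVec φ (star φ))
      = (star φ ⬝ᵥ ρ *ᵥ φ).re • vecMulVec φ (star φ) := by
    rw [msqrt_vecMulVec_star hφ, vecMulVec_star_mul_mul_vecMulVec_star, ← Complex.coe_smul, ← hc]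
  rw [uFid, hsand, msqrt_smul_vecMulVec_star hφ hc0, trace_smul,
    trace_vecMulVec, dotProduct_comm φ, hφ]
  simp [Real.sq_sqrt hc0]

lemma pDist_le_iff {ρ σ : Matrix ι ι ℂ} {a : ℝ} :
    pDist ρ σ ≤ a ↔ 0 ≤ a ∧ 1 - uFid ρ σ ≤ a ^ 2 :=
  Real.sqrt_le_iff

lemma one_sub_uFid_convex_comb_le {ρ τ : Matrix ι ι ℂ} (hρ : ρ.PosSemidef) (hτ : τ.PosSemidef)
    (hφ : star φ ⬝ᵥ φ = 1) {t δ : ℝ} (ht₀ : 0 ≤ t) (ht₁ : t ≤ 1) (hδ : 0 ≤ δ)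
    (hτφ : 1 - uFid τ (vecMulVec φ (star φ)) ≤ δ) :
    1 - uFid (t • ρ + (1 - t) • τ) (vecMulVec φ (star φ)) ≤ t + δ := by
  have hmix : (t • ρ + (1 - t) • τ).PosSemidef :=
    (hρ.smul ht₀).add (hτ.smul (sub_nonneg.2 ht₁))
  rw [uFid_vecMulVec_star hτ hφ] at hτφ
  rw [uFid_vecMulVec_star hmix hφ, add_mulVec, smul_mulVec, smul_mulVec, dotProduct_add,
    dotProduct_smul, dotProduct_smul, Complex.add_re, Complex.smul_re, Complex.smul_re,
    smul_eq_mul, smul_eq_mul]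
  have hρφ : 0 ≤ (star φ ⬝ᵥ ρ *ᵥ φ).re := hρ.re_dotProduct_nonneg φ
  nlinarith [mul_nonneg ht₀ hρφ, mul_nonneg ht₀ hδ,
    mul_nonneg (sub_nonneg.2 ht₁) (by linarith : 0 ≤ (star φ ⬝ᵥ τ *ᵥ φ).re - (1 - δ))]

lemma dmax_nonneg {ρ τ : Matrix ι ι ℂ} (hρ : ρ.trace = 1) (hτ : τ.trace = 1) :
    0 ≤ Dmax ρ τ := by
  refine Real.sInf_nonneg fun l hl => ?_
  have htr : (0 : ℝ) ≤ 2 ^ l - 1 := by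
    simpa [trace_sub, trace_smul, hρ, hτ] using (Complex.nonneg_iff.1 hl.trace_nonneg).1
  rw [← Real.rpow_le_rpow_left_iff one_lt_two, Real.rpow_zero]
  linarith

end

theorem convex_split_distillation {ι : Type*} [Fintype ι] [DecidableEq ι]
    (ρ τ : Matrix ι ι ℂ) (hρ : IsDensity ρ) (hτ : IsDensity τ)
    (φ : ι → ℂ) (hφ : star φ ⬝ᵥ φ = 1) (ε : ℝ) (hε : 0 < ε)
    (k : ℝ) (hk : k = Dmax ρ τ)
    (hclose : pDist τ (vecMulVec φ (star φ)) ≤ Real.sqrt ε / 2)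
    (n : ℕ) (hn : (n : ℝ) ≥ 2 ^ (k + 2) / ε) :
    pDist (((n : ℝ))⁻¹ • ρ + (((n : ℝ) - 1) / n) • τ) (vecMulVec φ (star φ))
        ≤ Real.sqrt ε ∧
    uFid (((n : ℝ))⁻¹ • ρ + (((n : ℝ) - 1) / n) • τ) (vecMulVec φ (star φ))
        ≥ 1 - ε := by
  have h4n : 4 / ε ≤ n := by
    have h4 : (4 : ℝ) ≤ 2 ^ (k + 2) :=
      calc (4 : ℝ) = 2 ^ (2 : ℝ) := by norm_num
        _ ≤ 2 ^ (k + 2) := Real.rpow_le_rpow_of_exponent_le one_le_two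
          (by linarith [hk ▸ dmax_nonneg hρ.2 hτ.2])
    exact (div_le_div_of_nonneg_right h4 hε.le).trans hn
  have hn₀ : (0 : ℝ) < n := (by positivity : (0 : ℝ) < 4 / ε).trans_le h4n
  have hninv : (n : ℝ)⁻¹ ≤ ε / 4 := by simpa using inv_anti₀ (by positivity) h4n
  have hτφ : 1 - uFid τ (vecMulVec φ (star φ)) ≤ ε / 4 := by
    have := (pDist_le_iff.1 hclose).2
    rwa [div_pow, Real.sq_sqrt hε.le, show (2 : ℝ) ^ 2 = 4 by norm_num] at this
  have hn₁ : (1 : ℝ) ≤ n := Nat.one_le_cast.2 (Nat.cast_pos.1 hn₀)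
  have hmix := one_sub_uFid_convex_comb_le hρ.1 hτ.1 hφ (inv_nonneg.2 hn₀.le)
    (inv_le_one_of_one_le₀ hn₁) (by positivity) hτφ
  rw [sub_div, div_self hn₀.ne', one_div]
  refine ⟨pDist_le_iff.2 ⟨Real.sqrt_nonneg ε, ?_⟩, by linarith⟩
  rw [Real.sq_sqrt hε.le]
  linarith
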